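/- Let a, b > 0 and λ > 0 with b/a < λ < b²/a². Then v* = (b² − λa²)/((λa − b)·a·b) is strictly positive, and v* is the unique minimizer over v > 0 of the function g(v) = λ(a v − log(1 + a v)) − b v + log(1 + b v). -/

import Mathlib

/-!
The derivative of `g` is `(λa - b)ab · v (v - v*) / ((1 + av)(1 + bv))`: under the hypotheses its
sign is that of `v - v*` on `v > 0`, so `g` strictly decreases on `(0, v*]` and strictly
increases on `[v*, ∞)`.
-/

open Set

theorem lt_of_hasDerivAt_neg_of_pos {f f' : ℝ → ℝ} {c w v : ℝ}
    (hf : ∀ x ∈ Ioi c, HasDerivAt f (f' x) x)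
    (hneg : ∀ x ∈ Ioo c w, f' x < 0) (hpos : ∀ x ∈ Ioi w, 0 < f' x)
    (hw : c < w) (hv : c < v) (hvw : v ≠ w) : f w < f v := by
  have hcont : ContinuousOn f (Ioi c) := fun x hx => (hf x hx).continuousAt.continuousWithinAt
  rcases hvw.lt_or_gt with hlt | hgt
  · have hanti : StrictAntiOn f (Ioc c w) :=
      strictAntiOn_of_hasDerivWithinAt_neg (convex_Ioc c w) (hcont.mono Ioc_subset_Ioi_self)
        (fun x hx => (hf x (interior_subset hx).1).hasDerivWithinAt)
        (by simpa only [interior_Ioc] using hneg)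
    exact hanti ⟨hv, hlt.le⟩ ⟨hw, le_rfl⟩ hlt
  · have hIci : Ici w ⊆ Ioi c := Ici_subset_Ioi.mpr hw
    have hmono : StrictMonoOn f (Ici w) :=
      strictMonoOn_of_hasDerivWithinAt_pos (convex_Ici w) (hcont.mono hIci)
        (fun x hx => (hf x (hIci (interior_subset hx))).hasDerivWithinAt)
        (by simpa only [interior_Ici] using hpos)
    exact hmono self_mem_Ici hgt.le hgt

noncomputable def attackCost (a b l v : ℝ) : ℝ :=
  l * (a * v - Real.log (1 + a * v)) - b * v + Real.log (1 + b * v)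

noncomputable def optimalVariance (a b l : ℝ) : ℝ :=
  (b ^ 2 - l * a ^ 2) / ((l * a - b) * a * b)

theorem optimalVariance_pos {a b l : ℝ} (ha : 0 < a) (hb : 0 < b)
    (hl₁ : b / a < l) (hl₂ : l < b ^ 2 / a ^ 2) : 0 < optimalVariance a b l := by
  have hba : b < l * a := (div_lt_iff₀ ha).mp hl₁
  have hnum : l * a ^ 2 < b ^ 2 := (lt_div_iff₀ (by positivity)).mp hl₂
  exact div_pos (sub_pos.mpr hnum) (mul_pos (mul_pos (sub_pos.mpr hba) ha) hb)

theorem hasDerivAt_attackCost {a b l x : ℝ} (hlab : (l * a - b) * a * b ≠ 0)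
    (hax : 1 + a * x ≠ 0) (hbx : 1 + b * x ≠ 0) :
    HasDerivAt (attackCost a b l)
      ((l * a - b) * a * b * x * (x - optimalVariance a b l) / ((1 + a * x) * (1 + b * x))) x := by
  have hA : HasDerivAt (fun v => 1 + a * v) a x := by
    simpa using ((hasDerivAt_id x).const_mul a).const_add 1
  have hB : HasDerivAt (fun v => 1 + b * v) b x := by
    simpa using ((hasDerivAt_id x).const_mul b).const_add 1
  refine (((((hasDerivAt_id x).const_mul a).sub (hA.log hax)).const_mul l).sub
    ((hasDerivAt_id x).const_mul b)).add (hB.log hbx) |>.congr_deriv ?_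
  have hw : (l * a - b) * a * b * optimalVariance a b l = b ^ 2 - l * a ^ 2 :=
    mul_div_cancel₀ _ hlab
  rw [eq_div_iff (mul_ne_zero hax hbx)]
  linear_combination (-(l * (1 + b * x))) * div_mul_cancel₀ a hax
    + (1 + a * x) * div_mul_cancel₀ b hbx + x * hw

theorem single_attack_optimal_variance_general (a b l : ℝ) (ha : 0 < a) (hb : 0 < b)
    (hl₁ : b / a < l) (hl₂ : l < b ^ 2 / a ^ 2) :
    0 < (b ^ 2 - l * a ^ 2) / ((l * a - b) * a * b) ∧
    ∀ v : ℝ, 0 < v → v ≠ (b ^ 2 - l * a ^ 2) / ((l * a - b) * a * b) →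
      (l * (a * ((b ^ 2 - l * a ^ 2) / ((l * a - b) * a * b))
          - Real.log (1 + a * ((b ^ 2 - l * a ^ 2) / ((l * a - b) * a * b))))
        - b * ((b ^ 2 - l * a ^ 2) / ((l * a - b) * a * b))
        + Real.log (1 + b * ((b ^ 2 - l * a ^ 2) / ((l * a - b) * a * b))))
      < (l * (a * v - Real.log (1 + a * v)) - b * v + Real.log (1 + b * v)) := by
  have hw : 0 < optimalVariance a b l := optimalVariance_pos ha hb hl₁ hl₂
  have hk : 0 < (l * a - b) * a * b :=
    mul_pos (mul_pos (sub_pos.mpr ((div_lt_iff₀ ha).mp hl₁)) ha) hb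
  refine ⟨hw, fun v hv hvw => ?_⟩
  refine lt_of_hasDerivAt_neg_of_pos (f := attackCost a b l) (c := 0)
    (fun x (hx : 0 < x) => hasDerivAt_attackCost hk.ne' (by positivity) (by positivity))
    (fun x hx => ?_) (fun x hx => ?_) hw hv hvw
  · have hx₀ : 0 < x := hx.1
    exact div_neg_of_neg_of_pos (mul_neg_of_pos_of_neg (by positivity) (sub_neg.mpr hx.2))
      (by positivity)
  · have hx₀ : 0 < x := hw.trans hx
    exact div_pos (mul_pos (by positivity) (sub_pos.mpr hx)) (by positivity)

/-- For `b/a < λ < b²/a²`, the variance `v* = (b² − λa²)/((λa − b)ab)` is strictly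
positive and is the unique minimizer over `v > 0` of
`g(v) = λ(av − log(1+av)) − bv + log(1+bv)`. -/
theorem single_attack_optimal_variance (a b l : ℝ) (ha : 0 < a) (hb : 0 < b)
    (hl : 0 < l) (hl₁ : b / a < l) (hl₂ : l < b ^ 2 / a ^ 2) :
    0 < (b ^ 2 - l * a ^ 2) / ((l * a - b) * a * b) ∧
    ∀ v : ℝ, 0 < v → v ≠ (b ^ 2 - l * a ^ 2) / ((l * a - b) * a * b) →
      (l * (a * ((b ^ 2 - l * a ^ 2) / ((l * a - b) * a * b))
          - Real.log (1 + a * ((b ^ 2 - l * a ^ 2) / ((l * a - b) * a * b))))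
        - b * ((b ^ 2 - l * a ^ 2) / ((l * a - b) * a * b))
        + Real.log (1 + b * ((b ^ 2 - l * a ^ 2) / ((l * a - b) * a * b))))
      < (l * (a * v - Real.log (1 + a * v)) - b * v + Real.log (1 + b * v)) :=
  single_attack_optimal_variance_general a b l ha hb hl₁ hl₂
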